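/- arXiv:2510.08554 — 4 statements merged into one kernel-verified Lean document; each statement's English description precedes it below -/
import Mathlib

section
/- Under the masked diffusion forward process, for any two initial distributions p₀ and π₀ on [M]^D that both evolve by independent masking of each coordinate with probability t, the KL divergence of the time-t marginals factorizes as KL(p_t ‖ π_t) = Σ_{S ⊆ [D]} t^{|S|}(1−t)^{D−|S|} KL(p₀^{S̄} ‖ π₀^{S̄}), where p₀^{S̄} denotes the marginal of p₀ on the coordinates not in S (the unmasked coordinates). -/
open Finset
open scoped Classical

/-- Discrete KL divergence between two mass functions on a finite type. -/
noncomputable def kld {α : Type*} [Fintype α] (p q : α → ℝ) : ℝ :=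
  ∑ x, p x * Real.log (p x / q x)

/-- Marginal of a mass function on `[M]^D` over the coordinates *not* in `S`
(the unmasked coordinates). -/
noncomputable def margOut {D M : ℕ} (p : (Fin D → Fin M) → ℝ) (S : Finset (Fin D)) :
    ({i : Fin D // i ∉ S} → Fin M) → ℝ :=
  fun z => ∑ y : Fin D → Fin M,
    if (∀ i : {i : Fin D // i ∉ S}, y i.1 = z i) then p y else 0

/-- Law at time `t` of the masked-diffusion forward process started from `p`:
each coordinate is independently replaced by the mask (`none`) with probability `t`. -/
noncomputable def maskedLaw {D M : ℕ} (t : ℝ) (p : (Fin D → Fin M) → ℝ) :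
    (Fin D → Option (Fin M)) → ℝ :=
  fun x => ∑ y : Fin D → Fin M,
    p y * ∏ i, (if x i = none then t else if x i = some (y i) then 1 - t else 0)

noncomputable def fromSigma {D M : ℕ}
    (s : Σ S : Finset (Fin D), ({i : Fin D // i ∉ S} → Fin M)) :
    Fin D → Option (Fin M) :=
  fun i => if h : i ∈ s.1 then none else some (s.2 ⟨i, h⟩)

lemma fromSigma_bijective (D M : ℕ) : Function.Bijective (@fromSigma D M) := by
  constructor
  · rintro ⟨S, z⟩ ⟨S', z'⟩ h
    have hS : S = S' := by
      ext i
      have hc := congrFun h i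
      by_cases hi : i ∈ S <;> by_cases hi' : i ∈ S' <;>
        simp [fromSigma, hi, hi'] at hc ⊢ <;> tauto
    subst hS
    have hz : z = z' := by
      funext i
      have hc := congrFun h i.1
      simpa [fromSigma, i.2] using hc
    rw [hz]
  · intro x
    refine ⟨⟨Finset.univ.filter (fun i => x i = none),
      fun i => (x i.1).get ?_⟩, ?_⟩
    · have h2 := i.2
      simp only [Finset.mem_filter, Finset.mem_univ, true_and] at h2
      exact Option.isSome_iff_ne_none.mpr h2
    · funext i
      by_cases hi : x i = none <;> simp [fromSigma, hi]

lemma maskedLaw_fromSigma {D M : ℕ} (t : ℝ) (p : (Fin D → Fin M) → ℝ)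
    (S : Finset (Fin D)) (z : {i : Fin D // i ∉ S} → Fin M) :
    maskedLaw t p (fromSigma ⟨S, z⟩) =
      t ^ S.card * (1 - t) ^ (D - S.card) * margOut p S z := by
  unfold maskedLaw margOut
  rw [Finset.mul_sum]
  refine Finset.sum_congr rfl fun y _ => ?_
  have hsplit : ∀ f : Fin D → ℝ, (∏ i, f i) = (∏ i ∈ S, f i) * ∏ i ∈ Sᶜ, f i :=
    fun f => (Finset.prod_mul_prod_compl S f).symm
  rw [hsplit]
  have h1 : (∏ i ∈ S, (if fromSigma ⟨S, z⟩ i = none then t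
      else if fromSigma ⟨S, z⟩ i = some (y i) then 1 - t else 0)) = t ^ S.card := by
    rw [Finset.prod_congr rfl (fun i hi => ?_), Finset.prod_const]
    simp [fromSigma, hi]
  have h2 : (∏ i ∈ Sᶜ, (if fromSigma ⟨S, z⟩ i = none then t
      else if fromSigma ⟨S, z⟩ i = some (y i) then 1 - t else 0)) =
      ∏ i : {i : Fin D // i ∉ S}, (if y i.1 = z i then 1 - t else 0) := by
    rw [Finset.prod_subtype Sᶜ (fun i => Finset.mem_compl)
      (fun i => if fromSigma ⟨S, z⟩ i = none then t
        else if fromSigma ⟨S, z⟩ i = some (y i) then 1 - t else 0)]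
    refine Finset.prod_congr rfl fun i _ => ?_
    have hi := i.2
    simp only [fromSigma, hi, dif_neg, not_false_iff]
    by_cases hy : y i.1 = z i
    · simp [hy]
    · have : ¬ (some (z i) = some (y i.1)) := by
        simp [eq_comm]; intro h; exact hy h.symm
      simp [this, hy]
  rw [h1, h2]
  have hcard : Fintype.card {i : Fin D // i ∉ S} = D - S.card := by
    have := Fintype.card_subtype_compl (fun i : Fin D => i ∈ S)
    simpa using this
  by_cases hag : ∀ i : {i : Fin D // i ∉ S}, y i.1 = z i
  · have : (∏ i : {i : Fin D // i ∉ S}, (if y i.1 = z i then 1 - t else 0)) =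
        (1 - t) ^ (D - S.card) := by
      rw [Finset.prod_congr rfl (fun i _ => if_pos (hag i)), Finset.prod_const]
      simp [hcard]
    rw [this, if_pos hag]
    ring
  · push_neg at hag
    obtain ⟨i, hi⟩ := hag
    have : (∏ i : {i : Fin D // i ∉ S}, (if y i.1 = z i then 1 - t else 0)) = 0 :=
      Finset.prod_eq_zero (Finset.mem_univ i) (by simp [hi])
    rw [this, if_neg (by push_neg; exact ⟨i, hi⟩)]
    ring

/-- Factorization of the KL divergence between the time-`t` marginals of the masked
diffusion forward process:
`KL(p_t ‖ π_t) = Σ_{S ⊆ [D]} t^{|S|}(1−t)^{D−|S|} KL(p₀^{S̄} ‖ π₀^{S̄})`. -/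
theorem kl_masked_diffusion_factorization
    (D M : ℕ) (t : ℝ) (ht : t ∈ Set.Icc (0:ℝ) 1)
    (p₀ π₀ : (Fin D → Fin M) → ℝ)
    (hp0 : ∀ y, 0 ≤ p₀ y) (hp1 : ∑ y, p₀ y = 1)
    (hq0 : ∀ y, 0 ≤ π₀ y) (hq1 : ∑ y, π₀ y = 1)
    (habs : ∀ y, π₀ y = 0 → p₀ y = 0) :
    kld (maskedLaw t p₀) (maskedLaw t π₀) =
      ∑ S : Finset (Fin D),
        t ^ S.card * (1 - t) ^ (D - S.card) * kld (margOut p₀ S) (margOut π₀ S) := by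
  have key := Fintype.sum_bijective (@fromSigma D M) (fromSigma_bijective D M)
    (fun s => maskedLaw t p₀ (fromSigma s) *
      Real.log (maskedLaw t p₀ (fromSigma s) / maskedLaw t π₀ (fromSigma s)))
    (fun x => maskedLaw t p₀ x * Real.log (maskedLaw t p₀ x / maskedLaw t π₀ x))
    (fun s => rfl)
  rw [kld, ← key, ← Finset.univ_sigma_univ, Finset.sum_sigma]
  refine Finset.sum_congr rfl fun S _ => ?_
  rw [kld, Finset.mul_sum]
  refine Finset.sum_congr rfl fun z _ => ?_
  simp only [maskedLaw_fromSigma]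
  set c := t ^ S.card * (1 - t) ^ (D - S.card) with hc
  rcases eq_or_ne c 0 with h0 | h0
  · simp [h0]
  · rw [mul_div_mul_left _ _ h0]
    ring
end

section
/- As a consequence of the masking factorization, t ↦ KL(p_t ‖ π_t) is a polynomial in t of degree at most D, specifically a Bernstein polynomial Σ_{k=0}^D c_k binom(D,k) t^k (1−t)^{D−k} with c_k the average of KL(p₀^{S̄} ‖ π₀^{S̄}) over all subsets S of size k; in particular it is infinitely differentiable (C^∞) on [0,1]. -/
open Finset
open scoped Classical

noncomputable section KLaux
variable {D M : ℕ}

/-- Set of masked coordinates of `x`. -/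
def maskOf (x : Fin D → Option (Fin M)) : Finset (Fin D) :=
  Finset.univ.filter (fun i => x i = none)

lemma not_mem_maskOf {x : Fin D → Option (Fin M)} {i : Fin D} (h : i ∉ maskOf x) :
    (x i).isSome := by
  have : ¬ x i = none := by simpa [maskOf] using h
  exact Option.ne_none_iff_isSome.mp this

/-- Values on unmasked coordinates. -/
def valsOf (x : Fin D → Option (Fin M)) : {i : Fin D // i ∉ maskOf x} → Fin M :=
  fun i => (x i.1).get (not_mem_maskOf i.2)

/-- Reconstruct a partially masked word from a mask set and unmasked values. -/
def embOf (S : Finset (Fin D)) (z : {i : Fin D // i ∉ S} → Fin M) :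
    Fin D → Option (Fin M) :=
  fun i => if h : i ∈ S then none else some (z ⟨i, h⟩)

lemma embOf_bijective :
    Function.Bijective
      (fun σ : Σ S : Finset (Fin D), ({i : Fin D // i ∉ S} → Fin M) =>
        embOf σ.1 σ.2) := by
  constructor
  · rintro ⟨S, z⟩ ⟨S', z'⟩ h
    simp only at h
    have hS : S = S' := by
      ext i
      constructor <;> intro hi <;> by_contra hi'
      · have := congrFun h i
        simp [embOf, hi, hi'] at this
      · have := congrFun h i
        simp [embOf, hi, hi'] at this
    subst hS
    have hz : z = z' := by
      funext i
      have := congrFun h i.1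
      simpa [embOf, i.2] using this
    rw [hz]
  · intro x
    refine ⟨⟨maskOf x, valsOf x⟩, ?_⟩
    funext i
    by_cases h : x i = none
    · simp [embOf, maskOf, h]
    · simp [embOf, maskOf, valsOf, h]

lemma maskedLaw_embOf (t : ℝ) (p : (Fin D → Fin M) → ℝ) (S : Finset (Fin D))
    (z : {i : Fin D // i ∉ S} → Fin M) :
    maskedLaw t p (embOf S z) =
      t ^ S.card * (1 - t) ^ (D - S.card) * margOut p S z := by
  have hcard : Fintype.card {i : Fin D // i ∉ S} = D - S.card := by
    simp [Fintype.card_subtype_compl, Fintype.card_coe]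
  unfold maskedLaw margOut
  rw [Finset.mul_sum]
  refine Finset.sum_congr rfl (fun y _ => ?_)
  have hsplit :
      (∏ i, (if embOf S z i = none then t
        else if embOf S z i = some (y i) then 1 - t else 0)) =
      (∏ i ∈ S, (if embOf S z i = none then t
        else if embOf S z i = some (y i) then 1 - t else 0)) *
      (∏ i ∈ Sᶜ, (if embOf S z i = none then t
        else if embOf S z i = some (y i) then 1 - t else 0)) :=
    (Finset.prod_mul_prod_compl S _).symm
  rw [hsplit]
  have h1 : (∏ i ∈ S, (if embOf S z i = none then t
      else if embOf S z i = some (y i) then 1 - t else 0)) = t ^ S.card := by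
    rw [Finset.prod_congr rfl (fun i hi => ?_), Finset.prod_const]
    simp [embOf, hi]
  have h2 : (∏ i ∈ Sᶜ, (if embOf S z i = none then t
      else if embOf S z i = some (y i) then 1 - t else 0)) =
      (if (∀ i : {i : Fin D // i ∉ S}, y i.1 = z i) then (1 - t) ^ (D - S.card) else 0) := by
    rw [Finset.prod_subtype (p := fun i => i ∉ S) (F := inferInstance) Sᶜ (fun i => by simp)
      (fun i => (if embOf S z i = none then t
      else if embOf S z i = some (y i) then 1 - t else 0))]
    have hterm : ∀ j : {i : Fin D // i ∉ S},
        (if embOf S z j.1 = none then t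
          else if embOf S z j.1 = some (y j.1) then 1 - t else 0) =
        (if z j = y j.1 then 1 - t else 0) := by
      intro j
      simp only [embOf, dif_neg j.2]
      simp
    rw [Finset.prod_congr rfl (fun j _ => hterm j)]
    by_cases hc : ∀ i : {i : Fin D // i ∉ S}, y i.1 = z i
    · rw [if_pos hc, Finset.prod_congr rfl (fun j _ => if_pos (hc j).symm), Finset.prod_const]
      simp [hcard]
    · rw [if_neg hc]
      push_neg at hc
      obtain ⟨j, hj⟩ := hc
      exact Finset.prod_eq_zero (Finset.mem_univ j)
        (if_neg (fun hh => hj hh.symm))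
  rw [h1, h2]
  by_cases hc : ∀ i : {i : Fin D // i ∉ S}, y i.1 = z i
  · rw [if_pos hc, if_pos hc]; ring
  · rw [if_neg hc, if_neg hc]; ring

lemma mul_kl_term (w P Q : ℝ) :
    (w * P) * Real.log ((w * P) / (w * Q)) = w * (P * Real.log (P / Q)) := by
  rcases eq_or_ne w 0 with h | h
  · simp [h]
  · rw [mul_div_mul_left _ _ h]; ring

/-- The main identity, valid for every real `t`. -/
lemma kld_maskedLaw (t : ℝ) (p q : (Fin D → Fin M) → ℝ) :
    kld (maskedLaw t p) (maskedLaw t q) =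
      ∑ S : Finset (Fin D),
        t ^ S.card * (1 - t) ^ (D - S.card) * kld (margOut p S) (margOut q S) := by
  unfold kld
  rw [← Function.Bijective.sum_comp embOf_bijective
    (fun x => maskedLaw t p x * Real.log (maskedLaw t p x / maskedLaw t q x))]
  rw [← Finset.univ_sigma_univ, Finset.sum_sigma]
  refine Finset.sum_congr rfl (fun S _ => ?_)
  rw [Finset.mul_sum]
  refine Finset.sum_congr rfl (fun z _ => ?_)
  simp only [maskedLaw_embOf]
  exact mul_kl_term _ _ _

end KLaux

/-- `t ↦ KL(p_t ‖ π_t)` is the Bernstein polynomial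
`Σ_{k=0}^D c_k binom(D,k) t^k (1−t)^{D−k}` with `c_k` the average marginal KL over
masked sets of size `k`; in particular it is `C^∞` on `[0,1]`. -/
theorem kl_masked_diffusion_bernstein
    (D M : ℕ) (p₀ π₀ : (Fin D → Fin M) → ℝ)
    (hp0 : ∀ y, 0 ≤ p₀ y) (hp1 : ∑ y, p₀ y = 1)
    (hq0 : ∀ y, 0 ≤ π₀ y) (hq1 : ∑ y, π₀ y = 1)
    (habs : ∀ y, π₀ y = 0 → p₀ y = 0)
    (c : ℕ → ℝ)
    (hc : ∀ k, c k = ((D.choose k : ℝ))⁻¹ *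
      ∑ S ∈ Finset.univ.filter (fun S : Finset (Fin D) => S.card = k),
        kld (margOut p₀ S) (margOut π₀ S)) :
    (∀ t ∈ Set.Icc (0:ℝ) 1,
        kld (maskedLaw t p₀) (maskedLaw t π₀) =
          ∑ k ∈ Finset.range (D + 1),
            c k * (D.choose k : ℝ) * t ^ k * (1 - t) ^ (D - k))
    ∧ ContDiffOn ℝ (⊤ : ℕ∞)
        (fun t : ℝ => kld (maskedLaw t p₀) (maskedLaw t π₀)) (Set.Icc 0 1) := by
  have key : ∀ t : ℝ,
      kld (maskedLaw t p₀) (maskedLaw t π₀) =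
        ∑ k ∈ Finset.range (D + 1),
          c k * (D.choose k : ℝ) * t ^ k * (1 - t) ^ (D - k) := by
    intro t
    rw [kld_maskedLaw]
    rw [← Finset.sum_fiberwise_of_maps_to (g := fun S : Finset (Fin D) => S.card)
      (t := Finset.range (D + 1))
      (fun S _ => Finset.mem_range.mpr (Nat.lt_succ_of_le
        ((Finset.card_le_univ S).trans (by simp))))]
    refine Finset.sum_congr rfl (fun k hk => ?_)
    have hk' : k ≤ D := Nat.lt_succ_iff.mp (Finset.mem_range.mp hk)
    have hch : (D.choose k : ℝ) ≠ 0 := Nat.cast_ne_zero.mpr (Nat.choose_pos hk').ne'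
    have hrw :
        ∑ S ∈ Finset.univ.filter (fun S : Finset (Fin D) => S.card = k),
          t ^ S.card * (1 - t) ^ (D - S.card) * kld (margOut p₀ S) (margOut π₀ S) =
        ∑ S ∈ Finset.univ.filter (fun S : Finset (Fin D) => S.card = k),
          t ^ k * (1 - t) ^ (D - k) * kld (margOut p₀ S) (margOut π₀ S) :=
      Finset.sum_congr rfl (fun S hS => by rw [(Finset.mem_filter.mp hS).2])
    rw [hrw, ← Finset.mul_sum, hc k]
    have hcancel : ((D.choose k : ℝ))⁻¹ *
        (∑ S ∈ Finset.univ.filter (fun S : Finset (Fin D) => S.card = k),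
          kld (margOut p₀ S) (margOut π₀ S)) * (D.choose k : ℝ) =
        ∑ S ∈ Finset.univ.filter (fun S : Finset (Fin D) => S.card = k),
          kld (margOut p₀ S) (margOut π₀ S) := by
      rw [mul_comm, ← mul_assoc, mul_inv_cancel₀ hch, one_mul]
    rw [hcancel]
    ring
  refine ⟨fun t _ => key t, ?_⟩
  have hpoly : ContDiff ℝ (⊤ : ℕ∞) (fun t : ℝ => ∑ k ∈ Finset.range (D + 1),
      c k * (D.choose k : ℝ) * t ^ k * (1 - t) ^ (D - k)) := by
    apply ContDiff.sum
    intro k _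
    exact ((contDiff_const.mul (contDiff_id.pow k)).mul
      ((contDiff_const.sub contDiff_id).pow (D - k)))
  exact hpoly.contDiffOn.congr (fun t _ => key t)
end

section
/- If the Increasing Conditional Divergence (ICD) condition holds — i.e., Δ_i(S) ≤ Δ_i(T) whenever S ⊆ T ⊆ [D]\{i}, where Δ_i(S) = F(S ∪ {i}) − F(S) — then all second forward differences Δ²c_k of the averaged coefficients c_k = binom(D,k)^{-1} Σ_{|S|=k} F(S) are nonnegative, and hence the function t ↦ KL(P_t ‖ Q_t) = Σ_k c_k binom(D,k) t^k(1−t)^{D−k} satisfies d²/dt² KL(P_t ‖ Q_t) ≥ 0 on [0,1] (convexity in t). -/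
open Finset
open scoped Classical

namespace ICDAux

open Polynomial

variable {D : ℕ}

/-- Reindexing: summing `H (insert i S)` over pairs `(S, i)` with `|S| = k`, `i ∉ S`
equals summing `H T` over pairs `(T, i)` with `|T| = k+1`, `i ∈ T`. -/
lemma step_sum (k : ℕ) (H : Finset (Fin D) → ℝ) :
    ∑ S ∈ univ.filter (fun S : Finset (Fin D) => S.card = k), ∑ i ∈ Sᶜ, H (insert i S)
    = ∑ T ∈ univ.filter (fun T : Finset (Fin D) => T.card = k + 1), ∑ i ∈ T, H T := by
  rw [Finset.sum_sigma' _ _ (fun S i => H (insert i S)),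
      Finset.sum_sigma' _ _ (fun T (_ : Fin D) => H T)]
  refine Finset.sum_nbij' (fun x => ⟨insert x.2 x.1, x.2⟩)
    (fun x => ⟨x.1.erase x.2, x.2⟩) ?_ ?_ ?_ ?_ ?_
  · rintro ⟨S, i⟩ hx
    simp only [Finset.mem_sigma, Finset.mem_filter, Finset.mem_univ, true_and,
      Finset.mem_compl] at hx ⊢
    exact ⟨by rw [Finset.card_insert_of_notMem hx.2, hx.1], Finset.mem_insert_self _ _⟩
  · rintro ⟨T, i⟩ hx
    simp only [Finset.mem_sigma, Finset.mem_filter, Finset.mem_univ, true_and,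
      Finset.mem_compl] at hx ⊢
    exact ⟨by rw [Finset.card_erase_of_mem hx.2, hx.1]; rfl, Finset.notMem_erase _ _⟩
  · rintro ⟨S, i⟩ hx
    simp only [Finset.mem_sigma, Finset.mem_filter, Finset.mem_univ, true_and,
      Finset.mem_compl] at hx
    simp [Finset.erase_insert hx.2]
  · rintro ⟨T, i⟩ hx
    simp only [Finset.mem_sigma, Finset.mem_filter, Finset.mem_univ, true_and] at hx
    simp [Finset.insert_erase hx.2]
  · rintro ⟨S, i⟩ hx
    simp

lemma card_level (k : ℕ) (S : Finset (Fin D))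
    (hS : S ∈ univ.filter (fun S : Finset (Fin D) => S.card = k)) : S.card = k := by
  simpa using hS

set_option maxHeartbeats 1000000 in
/-- The key combinatorial inequality from ICD. -/
lemma key_ineq (F : Finset (Fin D) → ℝ)
    (hICD : ∀ (i : Fin D) (S T : Finset (Fin D)), i ∉ T → S ⊆ T →
      F (insert i S) - F S ≤ F (insert i T) - F T)
    (k : ℕ) (hk : k + 2 ≤ D)
    (A : ℕ → ℝ)
    (hA : ∀ m, A m = ∑ S ∈ univ.filter (fun S : Finset (Fin D) => S.card = m), F S) :
    2 * ((k+1) * (D-k-1) : ℕ) * A (k+1)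
      ≤ ((k+1) * (k+2) : ℕ) * A (k+2) + ((D-k) * (D-k-1) : ℕ) * A k := by
  classical
  have hstep : ∀ (m : ℕ) (H : Finset (Fin D) → ℝ),
      ∑ S ∈ univ.filter (fun S : Finset (Fin D) => S.card = m), ∑ i ∈ Sᶜ, H (insert i S)
        = ((m+1 : ℕ) : ℝ) * ∑ T ∈ univ.filter (fun T : Finset (Fin D) => T.card = m+1), H T := by
    intro m H
    rw [step_sum m H, Finset.mul_sum]
    refine Finset.sum_congr rfl fun T hT => ?_
    rw [Finset.mem_filter] at hT
    rw [Finset.sum_const, hT.2, nsmul_eq_mul]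
  have hcardc : ∀ (m : ℕ) (S : Finset (Fin D)), S.card = m → Sᶜ.card = D - m := by
    intro m S hS
    rw [Finset.card_compl, hS, Fintype.card_fin]
  have hT3 : 0 ≤ ∑ S ∈ univ.filter (fun S : Finset (Fin D) => S.card = k), ∑ i ∈ Sᶜ,
      ∑ j ∈ (insert i S)ᶜ,
      (F (insert i (insert j S)) + F S - F (insert i S) - F (insert j S)) := by
    refine Finset.sum_nonneg fun S _ => Finset.sum_nonneg fun i hi =>
      Finset.sum_nonneg fun j hj => ?_
    rw [Finset.mem_compl] at hi hj
    have hij : i ∉ insert j S := by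
      intro h
      rcases Finset.mem_insert.1 h with h | h
      · exact hj (by rw [← h]; exact Finset.mem_insert_self i S)
      · exact hi h
    have h := hICD i S (insert j S) hij (Finset.subset_insert _ _)
    linarith
  simp only [Finset.sum_add_distrib, Finset.sum_sub_distrib] at hT3
  have hP1 : ∑ S ∈ univ.filter (fun S : Finset (Fin D) => S.card = k), ∑ i ∈ Sᶜ,
      ∑ j ∈ (insert i S)ᶜ, F (insert i (insert j S))
      = ((k+1:ℕ):ℝ) * (((k+2:ℕ):ℝ) * A (k+2)) := by
    calc ∑ S ∈ univ.filter (fun S : Finset (Fin D) => S.card = k), ∑ i ∈ Sᶜ,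
          ∑ j ∈ (insert i S)ᶜ, F (insert i (insert j S))
        = ∑ S ∈ univ.filter (fun S : Finset (Fin D) => S.card = k), ∑ i ∈ Sᶜ,
          (fun V => ∑ j ∈ Vᶜ, F (insert j V)) (insert i S) := by
          refine Finset.sum_congr rfl fun S _ => Finset.sum_congr rfl fun i _ => ?_
          exact Finset.sum_congr rfl fun j _ => by rw [Finset.insert_comm]
      _ = ((k+1:ℕ):ℝ) * ∑ T ∈ univ.filter (fun T : Finset (Fin D) => T.card = k+1),
            ∑ j ∈ Tᶜ, F (insert j T) := hstep k (fun V => ∑ j ∈ Vᶜ, F (insert j V))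
      _ = ((k+1:ℕ):ℝ) * (((k+2:ℕ):ℝ) * A (k+2)) := by
          rw [hstep (k+1) F, hA (k+2)]
  have hsub : D - (k+1) = D - k - 1 := by omega
  have hP2 : ∑ S ∈ univ.filter (fun S : Finset (Fin D) => S.card = k), ∑ i ∈ Sᶜ,
      ∑ j ∈ (insert i S)ᶜ, F S
      = ((D-k:ℕ):ℝ) * (((D-k-1:ℕ):ℝ) * A k) := by
    rw [hA k, Finset.mul_sum, Finset.mul_sum]
    refine Finset.sum_congr rfl fun S hS => ?_
    rw [Finset.mem_filter] at hS
    have h1 : ∀ i ∈ Sᶜ, ∑ j ∈ (insert i S)ᶜ, F S = ((D-k-1:ℕ):ℝ) * F S := by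
      intro i hi
      rw [Finset.mem_compl] at hi
      rw [Finset.sum_const, hcardc (k+1) _ (by rw [Finset.card_insert_of_notMem hi, hS.2]),
        hsub, nsmul_eq_mul]
    rw [Finset.sum_congr rfl h1, Finset.sum_const, hcardc k S hS.2, nsmul_eq_mul, ← mul_assoc]
  have hP3 : ∑ S ∈ univ.filter (fun S : Finset (Fin D) => S.card = k), ∑ i ∈ Sᶜ,
      ∑ j ∈ (insert i S)ᶜ, F (insert i S)
      = ((D-k-1:ℕ):ℝ) * (((k+1:ℕ):ℝ) * A (k+1)) := by
    calc ∑ S ∈ univ.filter (fun S : Finset (Fin D) => S.card = k), ∑ i ∈ Sᶜ,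
          ∑ j ∈ (insert i S)ᶜ, F (insert i S)
        = ∑ S ∈ univ.filter (fun S : Finset (Fin D) => S.card = k), ∑ i ∈ Sᶜ,
          ((D-k-1:ℕ):ℝ) * F (insert i S) := by
          refine Finset.sum_congr rfl fun S hS => Finset.sum_congr rfl fun i hi => ?_
          rw [Finset.mem_filter] at hS
          rw [Finset.mem_compl] at hi
          rw [Finset.sum_const,
            hcardc (k+1) _ (by rw [Finset.card_insert_of_notMem hi, hS.2]), hsub, nsmul_eq_mul]
      _ = ((D-k-1:ℕ):ℝ) * ∑ S ∈ univ.filter (fun S : Finset (Fin D) => S.card = k), ∑ i ∈ Sᶜ,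
            F (insert i S) := by
          rw [Finset.mul_sum]
          exact Finset.sum_congr rfl fun S _ => (Finset.mul_sum _ _ _).symm
      _ = ((D-k-1:ℕ):ℝ) * (((k+1:ℕ):ℝ) * A (k+1)) := by rw [hstep k F, hA (k+1)]
  have hP4 : ∑ S ∈ univ.filter (fun S : Finset (Fin D) => S.card = k), ∑ i ∈ Sᶜ,
      ∑ j ∈ (insert i S)ᶜ, F (insert j S)
      = ((D-k-1:ℕ):ℝ) * (((k+1:ℕ):ℝ) * A (k+1)) := by
    have hstepk := hstep k F
    calc ∑ S ∈ univ.filter (fun S : Finset (Fin D) => S.card = k), ∑ i ∈ Sᶜ,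
          ∑ j ∈ (insert i S)ᶜ, F (insert j S)
        = ∑ S ∈ univ.filter (fun S : Finset (Fin D) => S.card = k), ∑ i ∈ Sᶜ,
          ((∑ j ∈ Sᶜ, F (insert j S)) - F (insert i S)) := by
          refine Finset.sum_congr rfl fun S _ => Finset.sum_congr rfl fun i hi => ?_
          rw [Finset.compl_insert, Finset.sum_erase_eq_sub hi]
      _ = ∑ S ∈ univ.filter (fun S : Finset (Fin D) => S.card = k),
          (((D-k:ℕ):ℝ) * (∑ j ∈ Sᶜ, F (insert j S)) - ∑ i ∈ Sᶜ, F (insert i S)) := by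
          refine Finset.sum_congr rfl fun S hS => ?_
          rw [Finset.mem_filter] at hS
          rw [Finset.sum_sub_distrib, Finset.sum_const, hcardc k S hS.2, nsmul_eq_mul]
      _ = ((D-k:ℕ):ℝ) * (((k+1:ℕ):ℝ) * A (k+1)) - ((k+1:ℕ):ℝ) * A (k+1) := by
          rw [Finset.sum_sub_distrib, ← Finset.mul_sum, hstepk, hA (k+1)]
      _ = ((D-k-1:ℕ):ℝ) * (((k+1:ℕ):ℝ) * A (k+1)) := by
          have h1 : ((D-k-1:ℕ):ℝ) = ((D-k:ℕ):ℝ) - 1 := by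
            have : (1:ℕ) ≤ D - k := by omega
            push_cast [Nat.cast_sub this]
            ring
          rw [h1]; ring
  rw [hP1, hP2, hP3, hP4] at hT3
  have hc1 : (((k+1) * (D-k-1) : ℕ):ℝ) = ((k+1:ℕ):ℝ) * ((D-k-1:ℕ):ℝ) := by push_cast; ring
  have hc2 : (((k+1) * (k+2) : ℕ):ℝ) = ((k+1:ℕ):ℝ) * ((k+2:ℕ):ℝ) := by push_cast; ring
  have hc3 : (((D-k) * (D-k-1) : ℕ):ℝ) = ((D-k:ℕ):ℝ) * ((D-k-1:ℕ):ℝ) := by push_cast; ring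
  rw [hc1, hc2, hc3]
  nlinarith [hT3]

/-- Polynomial with Bernstein coefficients. -/
noncomputable def bpoly (n : ℕ) (b : ℕ → ℝ) : Polynomial ℝ :=
  ∑ k ∈ Finset.range (n+1), Polynomial.C (b k) * bernsteinPolynomial ℝ n k

lemma derivative_bpoly (n : ℕ) (b : ℕ → ℝ) :
    Polynomial.derivative (bpoly (n+1) b)
      = Polynomial.C ((n:ℝ)+1) * bpoly n (fun k => b (k+1) - b k) := by
  have hzero : bernsteinPolynomial ℝ n (n+1) = 0 :=
    bernsteinPolynomial.eq_zero_of_lt ℝ (Nat.lt_succ_self n)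
  have tele : ∑ k ∈ Finset.range (n+1), Polynomial.C (b (k+1)) * bernsteinPolynomial ℝ n (k+1)
      = (∑ k ∈ Finset.range (n+1), Polynomial.C (b k) * bernsteinPolynomial ℝ n k)
        - Polynomial.C (b 0) * bernsteinPolynomial ℝ n 0 := by
    have h1 := Finset.sum_range_succ'
      (fun k => Polynomial.C (b k) * bernsteinPolynomial ℝ n k) (n+1)
    rw [Finset.sum_range_succ, hzero, mul_zero, add_zero] at h1
    linear_combination -h1
  rw [bpoly, bpoly, map_sum, Finset.sum_range_succ']
  simp only [Polynomial.derivative_mul, Polynomial.derivative_C, zero_mul, zero_add,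
    bernsteinPolynomial.derivative_succ, bernsteinPolynomial.derivative_zero,
    Nat.add_sub_cancel, Finset.mul_sum]
  have hC : (Polynomial.C ((n:ℝ)+1)) = ((n+1 : ℕ) : Polynomial ℝ) := by simp
  have e1 : ∑ x ∈ Finset.range (n+1), Polynomial.C (b (x+1)) *
        (((n+1 : ℕ) : Polynomial ℝ) * (bernsteinPolynomial ℝ n x - bernsteinPolynomial ℝ n (x+1)))
      = ((n+1 : ℕ) : Polynomial ℝ) *
          (∑ x ∈ Finset.range (n+1), Polynomial.C (b (x+1)) * bernsteinPolynomial ℝ n x)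
        - ((n+1 : ℕ) : Polynomial ℝ) *
          (∑ x ∈ Finset.range (n+1), Polynomial.C (b (x+1)) * bernsteinPolynomial ℝ n (x+1)) := by
    rw [Finset.mul_sum, Finset.mul_sum, ← Finset.sum_sub_distrib]
    exact Finset.sum_congr rfl fun k _ => by ring
  have e2 : ∑ i ∈ Finset.range (n+1), Polynomial.C ((n:ℝ)+1) *
        (Polynomial.C (b (i+1) - b i) * bernsteinPolynomial ℝ n i)
      = ((n+1 : ℕ) : Polynomial ℝ) *
          (∑ x ∈ Finset.range (n+1), Polynomial.C (b (x+1)) * bernsteinPolynomial ℝ n x)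
        - ((n+1 : ℕ) : Polynomial ℝ) *
          (∑ x ∈ Finset.range (n+1), Polynomial.C (b x) * bernsteinPolynomial ℝ n x) := by
    rw [Finset.mul_sum, Finset.mul_sum, ← Finset.sum_sub_distrib]
    refine Finset.sum_congr rfl fun k _ => ?_
    rw [hC, map_sub]
    ring
  rw [e1, e2, tele]
  ring

lemma bpoly_eval_nonneg (n : ℕ) (b : ℕ → ℝ) (hb : ∀ k, k ≤ n → 0 ≤ b k)
    {t : ℝ} (ht : t ∈ Set.Icc (0:ℝ) 1) : 0 ≤ (bpoly n b).eval t := by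
  rw [bpoly, Polynomial.eval_finset_sum]
  refine Finset.sum_nonneg fun k hk => ?_
  rw [Finset.mem_range, Nat.lt_succ_iff] at hk
  simp only [Polynomial.eval_mul, Polynomial.eval_C, bernsteinPolynomial, Polynomial.eval_pow,
    Polynomial.eval_sub, Polynomial.eval_one, Polynomial.eval_X, Polynomial.eval_natCast]
  have h1 : (0:ℝ) ≤ t := ht.1
  have h2 : (0:ℝ) ≤ 1 - t := by linarith [ht.2]
  have := hb k hk
  have : (0:ℝ) ≤ (n.choose k : ℝ) := by positivity
  exact mul_nonneg (hb k hk) (mul_nonneg (mul_nonneg this (pow_nonneg h1 k)) (pow_nonneg h2 _))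

end ICDAux

/-- Under the Increasing Conditional Divergence (ICD) condition on the set function `F`,
all second forward differences of the level averages `c_k` are nonnegative, and the
Bernstein polynomial `t ↦ Σ_k c_k binom(D,k) t^k (1−t)^{D−k}` (which equals
`KL(P_t ‖ Q_t)` in the masking process) has nonnegative second derivative on `[0,1]`. -/
theorem icd_implies_convexity
    (D : ℕ) (F : Finset (Fin D) → ℝ)
    (hMono : ∀ S T : Finset (Fin D), S ⊆ T → F S ≤ F T)
    (hICD : ∀ (i : Fin D) (S T : Finset (Fin D)), i ∉ T → S ⊆ T →
      F (insert i S) - F S ≤ F (insert i T) - F T)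
    (c : ℕ → ℝ)
    (hc : ∀ k, c k = ((D.choose k : ℝ))⁻¹ *
      ∑ S ∈ Finset.univ.filter (fun S : Finset (Fin D) => S.card = k), F S) :
    (∀ k, k + 2 ≤ D → 0 ≤ c (k + 2) - 2 * c (k + 1) + c k)
    ∧ ∀ t ∈ Set.Icc (0:ℝ) 1,
        0 ≤ deriv (deriv (fun s : ℝ => ∑ k ∈ Finset.range (D + 1),
              c k * (D.choose k : ℝ) * s ^ k * (1 - s) ^ (D - k))) t := by
  have hpart1 : ∀ k, k + 2 ≤ D → 0 ≤ c (k + 2) - 2 * c (k + 1) + c k := by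
    intro k hk
    set A : ℕ → ℝ :=
      fun m => ∑ S ∈ Finset.univ.filter (fun S : Finset (Fin D) => S.card = m), F S with hA
    have hkey := ICDAux.key_ineq F hICD k hk A (fun m => rfl)
    have hcm : ∀ m, m ≤ D → ((D.choose m : ℕ):ℝ) * c m = A m := by
      intro m hm
      rw [hc m, ← mul_assoc, mul_inv_cancel₀, one_mul]
      exact_mod_cast (Nat.choose_pos hm).ne'
    have hsub : D - (k+1) = D - k - 1 := by omega
    have e2 : (k+1) * (k+2) * D.choose (k+2) = (k+1) * (D - k - 1) * D.choose (k+1) := by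
      have h2 := Nat.choose_succ_right_eq D (k+1)
      rw [hsub] at h2
      calc (k+1) * (k+2) * D.choose (k+2) = (k+1) * (D.choose (k+1+1) * (k+1+1)) := by ring
        _ = (k+1) * (D.choose (k+1) * (D-k-1)) := by rw [h2]
        _ = (k+1) * (D-k-1) * D.choose (k+1) := by ring
    have e3 : (k+1) * (D-k-1) * D.choose (k+1) = (D-k) * (D-k-1) * D.choose k := by
      have h1 := Nat.choose_succ_right_eq D k
      calc (k+1)*(D-k-1)*D.choose (k+1) = (D-k-1) * (D.choose (k+1) * (k+1)) := by ring
        _ = (D-k-1) * (D.choose k * (D-k)) := by rw [h1]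
        _ = (D-k) * (D-k-1) * D.choose k := by ring
    have hM : (0:ℝ) < (((k+1) * (k+2) * D.choose (k+2) : ℕ):ℝ) := by
      have h := Nat.choose_pos hk
      exact_mod_cast Nat.mul_pos (Nat.mul_pos (Nat.succ_pos k) (by omega)) h
    have t2 : (((k+1)*(k+2)*D.choose (k+2) : ℕ):ℝ) * c (k+2)
        = (((k+1)*(k+2):ℕ):ℝ) * A (k+2) := by
      rw [← hcm (k+2) hk]; push_cast; ring
    have t1 : (((k+1)*(k+2)*D.choose (k+2) : ℕ):ℝ) * c (k+1)
        = (((k+1)*(D-k-1):ℕ):ℝ) * A (k+1) := by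
      rw [e2, ← hcm (k+1) (by omega)]; push_cast; ring
    have t0 : (((k+1)*(k+2)*D.choose (k+2) : ℕ):ℝ) * c k
        = (((D-k)*(D-k-1):ℕ):ℝ) * A k := by
      rw [e2, e3, ← hcm k (by omega)]; push_cast; ring
    have hMc : (((k+1)*(k+2)*D.choose (k+2) : ℕ):ℝ) * (c (k+2) - 2*c (k+1) + c k)
        = (((k+1)*(k+2):ℕ):ℝ) * A (k+2) - 2*(((k+1)*(D-k-1):ℕ):ℝ) * A (k+1)
          + (((D-k)*(D-k-1):ℕ):ℝ) * A k := by
      calc (((k+1)*(k+2)*D.choose (k+2) : ℕ):ℝ) * (c (k+2) - 2*c (k+1) + c k)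
          = (((k+1)*(k+2)*D.choose (k+2) : ℕ):ℝ) * c (k+2)
            - 2*((((k+1)*(k+2)*D.choose (k+2) : ℕ):ℝ) * c (k+1))
            + (((k+1)*(k+2)*D.choose (k+2) : ℕ):ℝ) * c k := by ring
        _ = _ := by rw [t2, t1, t0]; ring
    have h1 : 0 ≤ (((k+1)*(k+2)*D.choose (k+2) : ℕ):ℝ) * (c (k+2) - 2*c (k+1) + c k) := by
      rw [hMc]; linarith [hkey]
    have h2 := mul_nonneg (inv_nonneg.mpr hM.le) h1
    rwa [← mul_assoc, inv_mul_cancel₀ hM.ne', one_mul] at h2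
  refine ⟨hpart1, ?_⟩
  intro t ht
  have hfp : (fun s : ℝ => ∑ k ∈ Finset.range (D + 1),
        c k * (D.choose k : ℝ) * s ^ k * (1 - s) ^ (D - k))
      = fun s => (ICDAux.bpoly D c).eval s := by
    funext s
    rw [ICDAux.bpoly, Polynomial.eval_finset_sum]
    refine Finset.sum_congr rfl fun k _ => ?_
    simp only [Polynomial.eval_mul, Polynomial.eval_C, bernsteinPolynomial, Polynomial.eval_pow,
      Polynomial.eval_sub, Polynomial.eval_one, Polynomial.eval_X, Polynomial.eval_natCast]
    ring
  have hd1 : deriv (fun s : ℝ => ∑ k ∈ Finset.range (D + 1),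
        c k * (D.choose k : ℝ) * s ^ k * (1 - s) ^ (D - k))
      = fun x => (Polynomial.derivative (ICDAux.bpoly D c)).eval x := by
    rw [hfp]; funext x; exact Polynomial.deriv (ICDAux.bpoly D c)
  rw [hd1, Polynomial.deriv]
  match D, hpart1 with
  | 0, hpart1 =>
    simp [ICDAux.bpoly, bernsteinPolynomial]
  | 1, hpart1 =>
    rw [show (1:ℕ) = 0 + 1 from rfl, ICDAux.derivative_bpoly 0 c]
    simp [ICDAux.bpoly, bernsteinPolynomial]
  | (n+2), hpart1 =>
    rw [show n+2 = (n+1)+1 from rfl, ICDAux.derivative_bpoly (n+1) c,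
      Polynomial.derivative_C_mul, ICDAux.derivative_bpoly n]
    rw [Polynomial.eval_mul, Polynomial.eval_mul, Polynomial.eval_C, Polynomial.eval_C]
    have hnn : 0 ≤ (ICDAux.bpoly n (fun k =>
        (fun k => c (k+1) - c k) (k+1) - (fun k => c (k+1) - c k) k)).eval t := by
      refine ICDAux.bpoly_eval_nonneg n _ (fun k hkn => ?_) ht
      have := hpart1 k (by omega)
      simp only []
      linarith
    have h0 : (0:ℝ) ≤ ((n+1:ℕ):ℝ)+1 := by positivity
    have h1 : (0:ℝ) ≤ (n:ℝ)+1 := by positivity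
    exact mul_nonneg h0 (mul_nonneg h1 hnn)
end

section
/- Monotonicity of the Bernstein-represented KL in time: since the first forward differences Δc_k = c_{k+1} − c_k are averages of nonnegative one-step gains Δ_i(S), the function f(t) = Σ_{k=0}^D c_k binom(D,k) t^k(1−t)^{D−k} satisfies f'(t) ≥ 0 for all t ∈ [0,1]; i.e., KL(P_t ‖ Q_t) is nondecreasing along the masking process. -/
/-!
Termwise differentiation of `f(t) = ∑ c_k C(D,k) t^k (1-t)^(D-k)` and a shift of index give
`f'(t) = ∑_{k<D} C(D,k) (D-k) (c_{k+1} - c_k) t^k (1-t)^(D-k-1)`, so it suffices that the level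
averages `c_k` increase. Double count the pairs `(S, i)` with `|S| = k`, `i ∉ S`: each contributes
`F S ≤ F (insert i S)`, and every `(k+1)`-set arises from exactly `k + 1` of them, so
`(D-k) ∑_{|S|=k} F S ≤ (k+1) ∑_{|T|=k+1} F T`; with `C(D,k+1) (k+1) = C(D,k) (D-k)` this is
`c_k ≤ c_{k+1}`.
-/

open Finset

section LevelSums

variable {α : Type*} [Fintype α]

lemma sum_powersetCard_sum_compl_insert [DecidableEq α] {β : Type*} [AddCommMonoid β]
    (F : Finset α → β) (k : ℕ) :
    ∑ S ∈ powersetCard k univ, ∑ i ∈ Sᶜ, F (insert i S) =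
      ∑ T ∈ powersetCard (k + 1) univ, ∑ _i ∈ T, F T := by
  rw [sum_sigma', sum_sigma']
  refine sum_bij' (fun p _ => ⟨insert p.2 p.1, p.2⟩) (fun p _ => ⟨p.1.erase p.2, p.2⟩)
    ?_ ?_ ?_ ?_ ?_
  · rintro ⟨S, i⟩ hp
    simp only [mem_sigma, mem_powersetCard_univ, mem_compl] at hp ⊢
    exact ⟨by rw [card_insert_of_notMem hp.2, hp.1], mem_insert_self i S⟩
  · rintro ⟨T, i⟩ hp
    simp only [mem_sigma, mem_powersetCard_univ, mem_compl] at hp ⊢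
    exact ⟨by rw [card_erase_of_mem hp.2, hp.1, Nat.add_sub_cancel], notMem_erase i T⟩
  · rintro ⟨S, i⟩ hp
    simp only [mem_sigma, mem_compl] at hp
    simp [erase_insert hp.2]
  · rintro ⟨T, i⟩ hp
    simp only [mem_sigma] at hp
    simp [insert_erase hp.2]
  · intro p _
    rfl

variable {β : Type*} [AddCommMonoid β] [PartialOrder β] [IsOrderedAddMonoid β]

lemma card_sub_nsmul_sum_powersetCard_le {F : Finset α → β} (hF : Monotone F) (k : ℕ) :
    (Fintype.card α - k) • ∑ S ∈ powersetCard k univ, F S ≤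
      (k + 1) • ∑ T ∈ powersetCard (k + 1) univ, F T := by
  classical
  calc (Fintype.card α - k) • ∑ S ∈ powersetCard k univ, F S
      = ∑ S ∈ powersetCard k univ, ∑ _i ∈ Sᶜ, F S := by
        rw [smul_sum]
        refine sum_congr rfl fun S hS => ?_
        rw [sum_const, card_compl, mem_powersetCard_univ.1 hS]
    _ ≤ ∑ S ∈ powersetCard k univ, ∑ i ∈ Sᶜ, F (insert i S) :=
        sum_le_sum fun S _ => sum_le_sum fun i _ => hF (subset_insert i S)
    _ = ∑ T ∈ powersetCard (k + 1) univ, ∑ _i ∈ T, F T :=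
        sum_powersetCard_sum_compl_insert F k
    _ = (k + 1) • ∑ T ∈ powersetCard (k + 1) univ, F T := by
        rw [smul_sum]
        refine sum_congr rfl fun T hT => ?_
        rw [sum_const, mem_powersetCard_univ.1 hT]

end LevelSums

section LevelAverages

variable {α 𝕜 : Type*} [Fintype α] [Field 𝕜] [LinearOrder 𝕜] [IsStrictOrderedRing 𝕜]

def levelAverage (F : Finset α → 𝕜) (k : ℕ) : 𝕜 :=
  ((Fintype.card α).choose k : 𝕜)⁻¹ * ∑ S ∈ powersetCard k univ, F S

lemma levelAverage_le_succ {F : Finset α → 𝕜} (hF : Monotone F) {k : ℕ}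
    (hk : k < Fintype.card α) : levelAverage F k ≤ levelAverage F (k + 1) := by
  set n := Fintype.card α
  have hchoose : (n.choose (k + 1) : 𝕜) * (k + 1 : ℕ) = n.choose k * (n - k : ℕ) := by
    exact_mod_cast Nat.choose_succ_right_eq n k
  have hdc := card_sub_nsmul_sum_powersetCard_le hF k
  rw [nsmul_eq_mul, nsmul_eq_mul] at hdc
  have h0 : (0 : 𝕜) < n.choose k := by exact_mod_cast Nat.choose_pos hk.le
  have h1 : (0 : 𝕜) < n.choose (k + 1) := by exact_mod_cast Nat.choose_pos hk
  unfold levelAverage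
  rw [inv_mul_eq_div, inv_mul_eq_div, div_le_div_iff₀ h0 h1]
  set A := ∑ S ∈ powersetCard k univ, F S
  set B := ∑ T ∈ powersetCard (k + 1) univ, F T
  refine le_of_mul_le_mul_right ?_ (by positivity : (0 : 𝕜) < (k + 1 : ℕ))
  calc A * n.choose (k + 1) * (k + 1 : ℕ) = n.choose k * ((n - k : ℕ) * A) := by
        linear_combination A * hchoose
    _ ≤ n.choose k * ((k + 1 : ℕ) * B) := mul_le_mul_of_nonneg_left hdc h0.le
    _ = B * n.choose k * (k + 1 : ℕ) := by ring

end LevelAverages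

section Bernstein

variable (c : ℕ → ℝ) (n : ℕ)

lemma hasDerivAt_sum_bernstein (t : ℝ) :
    HasDerivAt
      (fun s : ℝ => ∑ k ∈ range (n + 1), c k * n.choose k * s ^ k * (1 - s) ^ (n - k))
      (∑ k ∈ range n,
        n.choose k * (n - k : ℕ) * (c (k + 1) - c k) * t ^ k * (1 - t) ^ (n - (k + 1))) t := by
  set u : ℕ → ℝ := fun k => c k * n.choose k * k * t ^ (k - 1) * (1 - t) ^ (n - k)
  set v : ℕ → ℝ := fun k => c k * n.choose k * (n - k : ℕ) * t ^ k * (1 - t) ^ (n - (k + 1))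
  have hterm (k : ℕ) : HasDerivAt (fun s : ℝ => c k * n.choose k * s ^ k * (1 - s) ^ (n - k))
      (u k - v k) t := by
    refine (((hasDerivAt_pow k t).const_mul (c k * n.choose k)).fun_mul
      (((hasDerivAt_id' t).const_sub 1).fun_pow (n - k))).congr_deriv ?_
    simp only [u, v, Nat.sub_add_eq]
    ring
  refine (HasDerivAt.fun_sum fun k _ => hterm k).congr_deriv ?_
  have hu0 : u 0 = 0 := by simp [u]
  have hvn : v n = 0 := by simp [v]
  rw [sum_sub_distrib, sum_range_succ', sum_range_succ v, hu0, hvn, add_zero, add_zero,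
    ← sum_sub_distrib]
  refine sum_congr rfl fun k _ => ?_
  have hchoose : (n.choose (k + 1) : ℝ) * (k + 1 : ℕ) = n.choose k * (n - k : ℕ) := by
    exact_mod_cast Nat.choose_succ_right_eq n k
  simp only [u, v, Nat.add_sub_cancel]
  linear_combination c (k + 1) * t ^ k * (1 - t) ^ (n - (k + 1)) * hchoose

lemma deriv_sum_bernstein_nonneg (hc : ∀ k < n, c k ≤ c (k + 1)) {t : ℝ}
    (ht : t ∈ Set.Icc 0 1) :
    0 ≤ deriv
      (fun s : ℝ => ∑ k ∈ range (n + 1), c k * n.choose k * s ^ k * (1 - s) ^ (n - k)) t := by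
  rw [(hasDerivAt_sum_bernstein c n t).deriv]
  have ht0 : 0 ≤ t := ht.1
  have ht1 : 0 ≤ 1 - t := sub_nonneg.2 ht.2
  refine sum_nonneg fun k hk => ?_
  have hck : 0 ≤ c (k + 1) - c k := sub_nonneg.2 (hc k (mem_range.1 hk))
  positivity

end Bernstein

/-- If `F` is a monotone nondecreasing set function (e.g. `F(S) = KL` of marginals with
masked set `S`), then the Bernstein polynomial with level-average coefficients
`c_k = binom(D,k)⁻¹ Σ_{|S|=k} F(S)` is nondecreasing on `[0,1]`: `f'(t) ≥ 0`. -/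
theorem bernstein_kl_monotone_in_time
    (D : ℕ) (F : Finset (Fin D) → ℝ)
    (hMono : ∀ S T : Finset (Fin D), S ⊆ T → F S ≤ F T)
    (c : ℕ → ℝ)
    (hc : ∀ k, c k = ((D.choose k : ℝ))⁻¹ *
      ∑ S ∈ Finset.univ.filter (fun S : Finset (Fin D) => S.card = k), F S) :
    ∀ t ∈ Set.Icc (0:ℝ) 1,
      0 ≤ deriv (fun s : ℝ => ∑ k ∈ Finset.range (D + 1),
            c k * (D.choose k : ℝ) * s ^ k * (1 - s) ^ (D - k)) t := by
  have hc_eq (k : ℕ) : c k = levelAverage F k := by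
    rw [hc k, levelAverage, Fintype.card_fin, powersetCard_eq_filter, powerset_univ]
  have hc_mono (k : ℕ) (hk : k < D) : c k ≤ c (k + 1) := by
    rw [hc_eq, hc_eq]
    exact levelAverage_le_succ (fun S T hST => hMono S T hST) (by rwa [Fintype.card_fin])
  intro t ht
  exact deriv_sum_bernstein_nonneg c D hc_mono ht
end
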